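/- Let X_1,...,X_n (n >= 2) be exchangeable random variables with finite fourth moments and sum_{j=1}^n X_j^2 = n almost surely. Then for each i, Var( E(X_i^2 | X_1,...,X_{i-1}) ) <= E(X_1^4) / (n - i + 1). -/

import Mathlib

open MeasureTheory ProbabilityTheory Finset

/-!
Let `F = σ(X_j : j < i)`, `m = n - i` and `S = ∑_{j ≥ i} X_j²`. A transposition of two indices
`≥ i` fixes the first `i` coordinates, so by exchangeability every `X_j²` with `j ≥ i` has the same
integral as `X_i²` over each `F`-set; since `S = n - ∑_{j < i} X_j²` is `F`-measurable, this gives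
`E(X_i² | F) = S / m`. Exchangeability also gives
`Var S = m Var(X₀²) + m(m - 1) Cov(X₀², X₁²)`, and applied to the constant full sum the same
expansion forces `Cov(X₀², X₁²) ≤ 0`. Hence `Var E(X_i² | F) ≤ Var(X₀²) / m ≤ E(X₀⁴) / m`.
-/

lemma Equiv.Perm.exists_apply_eq_and_apply_eq {α : Type*} [DecidableEq α] {a b j k : α}
    (hab : a ≠ b) (hjk : j ≠ k) : ∃ σ : Equiv.Perm α, σ a = j ∧ σ b = k := by
  refine ⟨(Equiv.swap a j).trans (Equiv.swap (Equiv.swap a j b) k), ?_, Equiv.swap_apply_left _ _⟩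
  have hb : Equiv.swap a j b ≠ j := by
    simpa only [Equiv.swap_apply_left] using (Equiv.swap a j).injective.ne hab.symm
  simp only [Equiv.trans_apply, Equiv.swap_apply_left]
  exact Equiv.swap_apply_of_ne_of_ne hb.symm hjk

lemma MeasureTheory.MemLp.sq {Ω : Type*} [MeasurableSpace Ω] {μ : Measure Ω} {f : Ω → ℝ}
    (hf : MemLp f 4 μ) : MemLp (fun ω => f ω ^ 2) 2 μ := by
  have h42 : (4 : ENNReal) / 2 = 2 :=
    ((ENNReal.eq_div_iff (by norm_num) (by norm_num)).2 (by norm_num)).symm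
  simpa [h42] using hf.norm_rpow_div 2

lemma MeasureTheory.condExp_ae_eq_inv_card_smul_sum {Ω ι E : Type*} {m m₀ : MeasurableSpace Ω}
    {μ : Measure Ω} [NormedAddCommGroup E] [NormedSpace ℝ E] [CompleteSpace E]
    (hm : m ≤ m₀) [SigmaFinite (μ.trim hm)] {f : ι → Ω → E} {s : Finset ι} {i : ι} (hi : i ∈ s)
    (hf : ∀ j ∈ s, Integrable (f j) μ)
    (hf_eq : ∀ j ∈ s, ∀ t, MeasurableSet[m] t → μ t < ⊤ →
      ∫ ω in t, f j ω ∂μ = ∫ ω in t, f i ω ∂μ)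
    (hsum : AEStronglyMeasurable[m] (fun ω => ∑ j ∈ s, f j ω) μ) :
    μ[f i | m] =ᵐ[μ] fun ω => (#s : ℝ)⁻¹ • ∑ j ∈ s, f j ω := by
  have hcond : ∀ j ∈ s, μ[f j | m] =ᵐ[μ] μ[f i | m] := fun j hj =>
    ae_eq_condExp_of_forall_setIntegral_eq hm (hf i hi)
      (fun _ _ _ => integrable_condExp.integrableOn)
      (fun t ht hμt => by rw [setIntegral_condExp hm (hf j hj) ht, hf_eq j hj t ht hμt])
      stronglyMeasurable_condExp.aestronglyMeasurable
  have hsum_eq : (fun ω => ∑ j ∈ s, f j ω) =ᵐ[μ] ∑ j ∈ s, μ[f j | m] := by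
    rw [← Finset.sum_fn] at hsum ⊢
    exact (condExp_of_aestronglyMeasurable' hm hsum (integrable_finsetSum' s hf)).symm.trans
      (condExp_finsetSum hf m)
  have hcard : (#s : ℝ) ≠ 0 := Nat.cast_ne_zero.2 (card_ne_zero_of_mem hi)
  filter_upwards [hsum_eq, (Filter.eventually_all_finset s).2 hcond] with ω hω hcondω
  rw [hω, Finset.sum_apply, Finset.sum_congr rfl hcondω, sum_const, ← Nat.cast_smul_eq_nsmul ℝ,
    inv_smul_smul₀ hcard]

lemma MeasurableSpace.iSup_comap_eq_comap_pi {Ω ι β : Type*} [m : MeasurableSpace β]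
    (X : ι → Ω → β) (p : ι → Prop) :
    ⨆ k, ⨆ (_ : p k), MeasurableSpace.comap (X k) m
      = MeasurableSpace.comap (fun ω (k : Subtype p) => X k ω) MeasurableSpace.pi := by
  simp only [MeasurableSpace.pi, MeasurableSpace.comap_iSup, MeasurableSpace.comap_comp]
  exact (iSup_subtype (f := fun k : Subtype p => MeasurableSpace.comap (X k) m)).symm

namespace ProbabilityTheory

variable {Ω ι β : Type*} [MeasurableSpace Ω] [MeasurableSpace β] {μ : Measure Ω}
  {X : ι → Ω → β}

def Exchangeable (X : ι → Ω → β) (μ : Measure Ω) : Prop :=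
  ∀ σ : Equiv.Perm ι, μ.map (fun ω j => X (σ j) ω) = μ.map (fun ω j => X j ω)

namespace Exchangeable

lemma integral_comp_perm {E : Type*} [NormedAddCommGroup E] [NormedSpace ℝ E]
    (hexch : Exchangeable X μ) (hX : ∀ i, Measurable (X i)) (σ : Equiv.Perm ι)
    {ψ : (ι → β) → E} (hψ : StronglyMeasurable ψ) :
    ∫ ω, ψ (fun j => X (σ j) ω) ∂μ = ∫ ω, ψ (fun j => X j ω) ∂μ := by
  rw [← integral_map (measurable_pi_lambda _ fun j => hX (σ j)).aemeasurable
    hψ.aestronglyMeasurable, hexch σ,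
    integral_map (measurable_pi_lambda _ hX).aemeasurable hψ.aestronglyMeasurable]

lemma covariance_comp_perm (hexch : Exchangeable X μ) (hX : ∀ i, Measurable (X i))
    (σ : Equiv.Perm ι) {φ ψ : (ι → β) → ℝ} (hφ : Measurable φ) (hψ : Measurable ψ) :
    cov[fun ω => φ (fun j => X (σ j) ω), fun ω => ψ (fun j => X (σ j) ω); μ]
      = cov[fun ω => φ (fun j => X j ω), fun ω => ψ (fun j => X j ω); μ] := by
  rw [← covariance_map_fun hφ.aestronglyMeasurable hψ.aestronglyMeasurable
      (measurable_pi_lambda _ fun j => hX (σ j)).aemeasurable, hexch σ,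
    covariance_map_fun hφ.aestronglyMeasurable hψ.aestronglyMeasurable
      (measurable_pi_lambda _ hX).aemeasurable]

lemma covariance_comp_eq [DecidableEq ι] (hexch : Exchangeable X μ)
    (hX : ∀ i, Measurable (X i)) {f : β → ℝ} (hf : Measurable f) {a b j k : ι}
    (hab : a ≠ b) (hjk : j ≠ k) :
    cov[fun ω => f (X j ω), fun ω => f (X k ω); μ]
      = cov[fun ω => f (X a ω), fun ω => f (X b ω); μ] := by
  obtain ⟨σ, rfl, rfl⟩ := Equiv.Perm.exists_apply_eq_and_apply_eq hab hjk
  exact hexch.covariance_comp_perm hX σ (hf.comp (measurable_pi_apply a))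
    (hf.comp (measurable_pi_apply b))

lemma variance_comp_eq [DecidableEq ι] (hexch : Exchangeable X μ)
    (hX : ∀ i, Measurable (X i)) {f : β → ℝ} (hf : Measurable f) (a j : ι) :
    Var[fun ω => f (X j ω); μ] = Var[fun ω => f (X a ω); μ] := by
  have hfX : ∀ i, AEMeasurable (fun ω => f (X i ω)) μ := fun i => (hf.comp (hX i)).aemeasurable
  have := hexch.covariance_comp_perm hX (Equiv.swap a j) (hf.comp (measurable_pi_apply a))
    (hf.comp (measurable_pi_apply a))
  simp only [Function.comp_apply, Equiv.swap_apply_left] at this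
  rwa [covariance_self (hfX j), covariance_self (hfX a)] at this

lemma setIntegral_comp_eq_of_measurableSet_iSup [DecidableEq ι] (hexch : Exchangeable X μ)
    (hX : ∀ i, Measurable (X i)) {p : ι → Prop} {i j : ι} (hi : ¬p i) (hj : ¬p j) {f : β → ℝ}
    (hf : Measurable f) {s : Set Ω}
    (hs : MeasurableSet[⨆ k, ⨆ (_ : p k), MeasurableSpace.comap (X k) inferInstance] s) :
    ∫ ω in s, f (X j ω) ∂μ = ∫ ω in s, f (X i ω) ∂μ := by
  rw [MeasurableSpace.iSup_comap_eq_comap_pi] at hs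
  obtain ⟨B, hB, rfl⟩ := hs
  have hV : Measurable fun ω (k : Subtype p) => X k ω := measurable_pi_lambda _ fun k => hX k
  have hR : Measurable fun (v : ι → β) (k : Subtype p) => v k :=
    measurable_pi_lambda _ fun k => measurable_pi_apply _
  set ψ := ((fun (v : ι → β) (k : Subtype p) => v k) ⁻¹' B).indicator fun v => f (v j)
  have hψ : Measurable ψ := (hf.comp (measurable_pi_apply j)).indicator (hR hB)
  have hswap : ∀ ω,
      (fun (k : Subtype p) => X (Equiv.swap i j k) ω) = fun (k : Subtype p) => X k ω :=
    fun ω => funext fun k => by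
      rw [Equiv.swap_apply_of_ne_of_ne (fun h : (k : ι) = i => hi (h ▸ k.2))
        (fun h : (k : ι) = j => hj (h ▸ k.2))]
  have hψ_swap : ∀ ω, ψ (fun k => X (Equiv.swap i j k) ω)
      = ((fun ω (k : Subtype p) => X k ω) ⁻¹' B).indicator (fun ω => f (X i ω)) ω := fun ω => by
    classical
    simp only [ψ, Set.indicator_apply, Set.mem_preimage, Equiv.swap_apply_right, hswap]
  rw [← integral_indicator (hV hB), ← integral_indicator (hV hB), ← funext hψ_swap,
    hexch.integral_comp_perm hX (Equiv.swap i j) hψ.stronglyMeasurable]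
  rfl

lemma variance_sum_comp [DecidableEq ι] [IsFiniteMeasure μ] (hexch : Exchangeable X μ)
    (hX : ∀ i, Measurable (X i)) {f : β → ℝ} (hf : Measurable f)
    (hf2 : ∀ j, MemLp (fun ω => f (X j ω)) 2 μ) {a b : ι} (hab : a ≠ b) (s : Finset ι) :
    Var[fun ω => ∑ j ∈ s, f (X j ω); μ]
      = #s * (Var[fun ω => f (X a ω); μ] - cov[fun ω => f (X a ω), fun ω => f (X b ω); μ])
        + #s ^ 2 * cov[fun ω => f (X a ω), fun ω => f (X b ω); μ] := by
  rw [variance_fun_sum' fun j _ => hf2 j]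
  have hrow : ∀ j ∈ s, ∑ k ∈ s, cov[fun ω => f (X j ω), fun ω => f (X k ω); μ]
      = (Var[fun ω => f (X a ω); μ] - cov[fun ω => f (X a ω), fun ω => f (X b ω); μ])
        + #s * cov[fun ω => f (X a ω), fun ω => f (X b ω); μ] := by
    intro j hj
    rw [← add_sum_erase s _ hj, covariance_self (hf2 j).aemeasurable,
      hexch.variance_comp_eq hX hf a j,
      sum_congr rfl fun k hk => hexch.covariance_comp_eq hX hf hab (ne_of_mem_erase hk).symm,
      sum_const, card_erase_of_mem hj, nsmul_eq_mul, Nat.cast_pred (card_pos.2 ⟨j, hj⟩)]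
    ring
  rw [sum_congr rfl hrow, sum_const, nsmul_eq_mul]
  ring

lemma covariance_comp_nonpos_of_sum_eq_const [DecidableEq ι] [Fintype ι] [IsProbabilityMeasure μ]
    (hexch : Exchangeable X μ) (hX : ∀ i, Measurable (X i)) {f : β → ℝ} (hf : Measurable f)
    (hf2 : ∀ j, MemLp (fun ω => f (X j ω)) 2 μ) {a b : ι} (hab : a ≠ b) {c : ℝ}
    (hsum : ∀ᵐ ω ∂μ, ∑ j, f (X j ω) = c) :
    cov[fun ω => f (X a ω), fun ω => f (X b ω); μ] ≤ 0 := by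
  have hvar := hexch.variance_sum_comp hX hf hf2 hab univ
  rw [variance_congr hsum, ← covariance_self aemeasurable_const, covariance_const_left] at hvar
  have hcard : 2 ≤ (#(univ : Finset ι) : ℝ) := by
    exact_mod_cast (Finset.one_lt_card_iff.2 ⟨a, b, mem_univ a, mem_univ b, hab⟩)
  -- `0 = Var (∑ⱼ f (X j)) = N Var (f (X a)) + N (N - 1) cov`, with `N = card ι ≥ 2`
  by_contra! hpos
  nlinarith [mul_nonneg (by linarith : (0 : ℝ) ≤ #(univ : Finset ι))
      (variance_nonneg (fun ω => f (X a ω)) μ),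
    mul_pos (mul_pos (by linarith : (0 : ℝ) < #(univ : Finset ι))
      (by linarith : (0 : ℝ) < #(univ : Finset ι) - 1)) hpos]

lemma variance_average_le [DecidableEq ι] [IsFiniteMeasure μ] (hexch : Exchangeable X μ)
    (hX : ∀ i, Measurable (X i)) {f : β → ℝ} (hf : Measurable f)
    (hf2 : ∀ j, MemLp (fun ω => f (X j ω)) 2 μ) {a b : ι} (hab : a ≠ b)
    (hcov : cov[fun ω => f (X a ω), fun ω => f (X b ω); μ] ≤ 0) {s : Finset ι} (hs : s.Nonempty) :
    Var[fun ω => (#s : ℝ)⁻¹ * ∑ j ∈ s, f (X j ω); μ] ≤ Var[fun ω => f (X a ω); μ] / #s := by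
  rw [variance_const_mul, hexch.variance_sum_comp hX hf hf2 hab]
  have hm : (1 : ℝ) ≤ #s := by exact_mod_cast hs.card_pos
  generalize Var[fun ω => f (X a ω); μ] = v
  generalize cov[fun ω => f (X a ω), fun ω => f (X b ω); μ] = κ at hcov ⊢
  generalize (#s : ℝ) = m at hm ⊢
  calc m⁻¹ ^ 2 * (m * (v - κ) + m ^ 2 * κ) = (v + (m - 1) * κ) / m := by field_simp; ring
    _ ≤ v / m := by gcongr; nlinarith

lemma condExp_comp_ae_eq_of_sum_eq_const [LinearOrder ι] [Fintype ι] [LocallyFiniteOrderTop ι]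
    [LocallyFiniteOrderBot ι] [IsFiniteMeasure μ] (hexch : Exchangeable X μ)
    (hX : ∀ i, Measurable (X i)) {f : β → ℝ} (hf : Measurable f)
    (hfi : ∀ j, Integrable (fun ω => f (X j ω)) μ) {c : ℝ} (hsum : ∀ᵐ ω ∂μ, ∑ j, f (X j ω) = c)
    (i : ι) :
    μ[fun ω => f (X i ω) | ⨆ (j) (_ : j < i), MeasurableSpace.comap (X j) inferInstance]
      =ᵐ[μ] fun ω => (#(Ici i) : ℝ)⁻¹ * ∑ j ∈ Ici i, f (X j ω) := by
  have hF : (⨆ (j) (_ : j < i), MeasurableSpace.comap (X j) inferInstance) ≤ ‹MeasurableSpace Ω› :=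
    iSup₂_le fun j _ => (hX j).comap_le
  have htail : (fun ω => ∑ j ∈ Ici i, f (X j ω)) =ᵐ[μ] fun ω => c - ∑ j ∈ Iio i, f (X j ω) := by
    filter_upwards [hsum] with ω hω
    rw [← hω, ← sum_filter_add_sum_filter_not univ (· < i)]
    simp only [filter_gt_eq_Iio, filter_le_eq_Ici, not_lt]
    ring
  have htail_meas : AEStronglyMeasurable[⨆ (j) (_ : j < i),
      MeasurableSpace.comap (X j) inferInstance] (fun ω => ∑ j ∈ Ici i, f (X j ω)) μ := by
    refine (Measurable.aestronglyMeasurable ?_).congr htail.symm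
    refine measurable_const.sub (Finset.measurable_sum _ fun j hj => hf.comp ?_)
    exact measurable_iff_comap_le.2 (le_iSup₂ (f := fun j (_ : j < i) =>
      MeasurableSpace.comap (X j) inferInstance) j (mem_Iio.1 hj))
  simpa only [smul_eq_mul] using condExp_ae_eq_inv_card_smul_sum hF (mem_Ici.2 le_rfl)
    (fun j _ => hfi j) (fun j hj t ht _ => hexch.setIntegral_comp_eq_of_measurableSet_iSup hX
      (p := (· < i)) (lt_irrefl i) (not_lt.2 (mem_Ici.1 hj)) hf ht) htail_meas

end Exchangeable
end ProbabilityTheory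

/-- Zero-based `i`: the bound `E(X₀⁴) / (n - i)` is the paper's `E(X₁⁴) / (n - i + 1)`. -/
theorem exchangeable_var_condexp_sq
    {Ω : Type*} [MeasureSpace Ω] [IsProbabilityMeasure (ℙ : Measure Ω)]
    {n : ℕ} (hn : 2 ≤ n) (X : Fin n → Ω → ℝ)
    (hXm : ∀ i, Measurable (X i))
    (hX4 : ∀ i, MemLp (X i) 4 ℙ)
    (hexch : ∀ σ : Equiv.Perm (Fin n),
      Measure.map (fun ω => fun j => X (σ j) ω) ℙ = Measure.map (fun ω => fun j => X j ω) ℙ)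
    (hsumsq : ∀ᵐ ω ∂ℙ, ∑ j, X j ω ^ 2 = (n : ℝ))
    (i : Fin n) :
    (∫ ω, ((ℙ[(fun ω' => X i ω' ^ 2) |
          ⨆ (j : Fin n) (_ : j < i), MeasurableSpace.comap (X j) inferInstance]) ω
        - ∫ ω', (ℙ[(fun ω'' => X i ω'' ^ 2) |
          ⨆ (j : Fin n) (_ : j < i), MeasurableSpace.comap (X j) inferInstance]) ω' ∂ℙ) ^ 2 ∂ℙ)
      ≤ (∫ ω, X ⟨0, by omega⟩ ω ^ 4 ∂ℙ) / ((n : ℝ) - i) := by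
  replace hexch : Exchangeable X ℙ := hexch
  have hab : (⟨0, by omega⟩ : Fin n) ≠ ⟨1, by omega⟩ := by simp [Fin.ext_iff]
  have hsq_meas : Measurable fun x : ℝ => x ^ 2 := measurable_id.pow_const 2
  have hsq : ∀ j, MemLp (fun ω => X j ω ^ 2) 2 ℙ := fun j => (hX4 j).sq
  have hcond := hexch.condExp_comp_ae_eq_of_sum_eq_const hXm hsq_meas
    (fun j => (hsq j).integrable one_le_two) hsumsq i
  have hcov := hexch.covariance_comp_nonpos_of_sum_eq_const hXm hsq_meas hsq hab hsumsq
  have hvar : Var[fun ω => X ⟨0, by omega⟩ ω ^ 2; ℙ] ≤ ∫ ω, X ⟨0, by omega⟩ ω ^ 4 ∂ℙ := by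
    convert variance_le_expectation_sq (hsq _).aestronglyMeasurable using 3 with ω
    simp only [Pi.pow_apply, ← pow_mul]
  rw [← variance_eq_integral integrable_condExp.aemeasurable, variance_congr hcond]
  calc _ ≤ Var[fun ω => X ⟨0, by omega⟩ ω ^ 2; ℙ] / #(Ici i) :=
        hexch.variance_average_le hXm hsq_meas hsq hab hcov nonempty_Ici
    _ ≤ _ := by
      rw [Fin.card_Ici, Nat.cast_sub i.isLt.le]
      exact div_le_div_of_nonneg_right hvar (sub_nonneg.2 (by exact_mod_cast i.isLt.le))
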